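/- arXiv:2206.08238 — 2 statements merged into one kernel-verified Lean document; each statement's English description precedes it below -/
import Mathlib

section
/- Let n ≥ 2, let M ⊆ ℝⁿ be an open set containing 0, and let N = {(t,0,…,0) ∈ M : t ∈ ℝ}. Let α be a smooth 1-form on M (a smooth map M → (ℝⁿ)*) whose exterior derivative dα, defined by dα_x(u,v) = (D_xα·u)(v) − (D_xα·v)(u), vanishes at every point of N. Then there exist an open neighborhood M′ ⊆ M of 0 and a smooth 1-form β on M′ such that dβ = dα on M′ and β vanishes to second order along N, i.e. β(p) = 0 and Dβ(p) = 0 for every p ∈ N ∩ M′. -/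
/-!
Let `P` be a continuous linear projection onto the axis `N` and `Q = 1 - P`. The pullback
`P*α = α(P ·) ∘ P` is closed, since `dα` vanishes at `Px ∈ N`, and so is `dG` for the smooth
function `G x = α(Px)(Qx) + ½ Dα(Px)(Qx)(Qx)`, the second-order truncation of the homotopy
primitive `∫₀¹ α(Px + tQx)(Qx) dt` along the fibres of `P`. Hence `β = α - P*α - dG` has
`dβ = dα`. At `p ∈ N` we have `Qp = 0`, so `dG p = α p ∘ Q` and `β p = 0`, and
`D²G p (u, v) = Dα p (Pu, Qv) + Dα p (Pv, Qu) + ½ (Dα p (Qu, Qv) + Dα p (Qv, Qu))`,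
which is `Dα p (u, v) - Dα p (Pu, Pv)` because `Dα p` is symmetric; so `Dβ p = 0`.
-/

noncomputable section

open Set Topology
open scoped ContDiff

section SecondDerivative

variable {𝕜 : Type*} [NontriviallyNormedField 𝕜]
  {E F G : Type*} [NormedAddCommGroup E] [NormedSpace 𝕜 E] [NormedAddCommGroup F]
  [NormedSpace 𝕜 F] [NormedAddCommGroup G] [NormedSpace 𝕜 G]

theorem HasFDerivAt.clm_apply_of_eq_zero {c : E → F →L[𝕜] G} {c' : E →L[𝕜] F →L[𝕜] G}
    {u : E → F} {u' : E →L[𝕜] F} {x : E} (hc : HasFDerivAt c c' x) (hu : HasFDerivAt u u' x)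
    (hux : u x = 0) : HasFDerivAt (fun y => c y (u y)) ((c x).comp u') x := by
  simpa [hux] using hc.clm_apply hu

theorem fderiv_fderiv_clm_apply_of_map_eq_zero {c : E → F →L[𝕜] G} {T : E →L[𝕜] F}
    {s : Set E} (hs : IsOpen s) (hc : ContDiffOn 𝕜 2 c s) {p : E} (hp : p ∈ s) (hTp : T p = 0)
    (u v : E) :
    fderiv 𝕜 (fderiv 𝕜 fun x => c x (T x)) p u v
      = fderiv 𝕜 c p u (T v) + fderiv 𝕜 c p v (T u) := by
  have hdiff (x : E) (hx : x ∈ s) : DifferentiableAt 𝕜 c x :=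
    (hc.contDiffAt (hs.mem_nhds hx)).differentiableAt (by norm_num)
  have hdiff' : DifferentiableAt 𝕜 (fderiv 𝕜 c) p :=
    ((hc.fderiv_of_isOpen (m := 1) hs (by norm_num)).contDiffAt (hs.mem_nhds hp)).differentiableAt
      (by norm_num)
  have hg : ContDiffOn 𝕜 2 (fun x => c x (T x)) s := hc.clm_apply T.contDiff.contDiffOn
  have hg' : DifferentiableAt 𝕜 (fderiv 𝕜 fun x => c x (T x)) p :=
    ((hg.fderiv_of_isOpen (m := 1) hs (by norm_num)).contDiffAt (hs.mem_nhds hp)).differentiableAt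
      (by norm_num)
  have hderiv : (fun x => fderiv 𝕜 (fun x => c x (T x)) x v) =ᶠ[𝓝 p]
      fun x => c x (T v) + fderiv 𝕜 c x v (T x) := by
    filter_upwards [hs.mem_nhds hp] with x hx
    simp [fderiv_clm_apply (hdiff x hx) T.differentiableAt]
  have h := (((hdiff p hp).hasFDerivAt.clm_apply (hasFDerivAt_const (T v) p)).add
    ((hdiff'.hasFDerivAt.clm_apply (hasFDerivAt_const v p)).clm_apply_of_eq_zero
      T.hasFDerivAt hTp)).congr_of_eventuallyEq hderiv
  have hswap : fderiv 𝕜 (fderiv 𝕜 fun x => c x (T x)) p u v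
      = fderiv 𝕜 (fun x => fderiv 𝕜 (fun x => c x (T x)) x v) p u := by
    simp [fderiv_clm_apply hg' (differentiableAt_const v)]
  rw [hswap, h.fderiv]
  simp

end SecondDerivative

section RelativePrimitive

variable {E F : Type*} [NormedAddCommGroup E] [NormedSpace ℝ E]
  [NormedAddCommGroup F] [NormedSpace ℝ F]

def pullback (L : E →L[ℝ] F) (α : F → F →L[ℝ] ℝ) (x : E) : E →L[ℝ] ℝ :=
  (α (L x)).comp L

theorem contDiffOn_pullback {L : E →L[ℝ] F} {α : F → F →L[ℝ] ℝ} {s : Set F} {n : WithTop ℕ∞}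
    (hα : ContDiffOn ℝ n α s) : ContDiffOn ℝ n (pullback L α) (L ⁻¹' s) :=
  (hα.comp L.contDiff.contDiffOn (mapsTo_preimage L s)).clm_comp contDiffOn_const

theorem fderiv_pullback_apply {L : E →L[ℝ] F} {α : F → F →L[ℝ] ℝ} {x : E}
    (hα : DifferentiableAt ℝ α (L x)) (u v : E) :
    fderiv ℝ (pullback L α) x u v = fderiv ℝ α (L x) (L u) (L v) := by
  have h : HasFDerivAt (pullback L α) _ x :=
    (hα.hasFDerivAt.comp x L.hasFDerivAt).clm_comp (hasFDerivAt_const L x)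
  rw [h.fderiv]
  simp

variable {P : E →L[ℝ] E} {α : E → E →L[ℝ] ℝ} {s : Set E} {p : E}

def relativePotentialCoeff (P : E →L[ℝ] E) (α : E → E →L[ℝ] ℝ) (x : E) : E →L[ℝ] ℝ :=
  α (P x) + (2 : ℝ)⁻¹ • fderiv ℝ α (P x) ((1 - P) x)

def relativePotential (P : E →L[ℝ] E) (α : E → E →L[ℝ] ℝ) (x : E) : ℝ :=
  relativePotentialCoeff P α x ((1 - P) x)

theorem contDiffOn_relativePotentialCoeff (hs : IsOpen s) (hα : ContDiffOn ℝ ∞ α s) :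
    ContDiffOn ℝ ∞ (relativePotentialCoeff P α) (P ⁻¹' s) := by
  have hmaps := mapsTo_preimage P s
  exact (hα.comp P.contDiff.contDiffOn hmaps).add
    (((hα.fderiv_of_isOpen hs le_rfl).comp P.contDiff.contDiffOn hmaps).clm_apply
      (1 - P).contDiff.contDiffOn |>.const_smul _)

theorem relativePotentialCoeff_eq_of_map_eq (hPp : P p = p) :
    relativePotentialCoeff P α p = α p := by
  simp [relativePotentialCoeff, hPp]

theorem hasFDerivAt_relativePotentialCoeff (hs : IsOpen s) (hα : ContDiffOn ℝ ∞ α s)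
    (hp : p ∈ s) (hPp : P p = p) :
    HasFDerivAt (relativePotentialCoeff P α)
      ((fderiv ℝ α p).comp P + (2 : ℝ)⁻¹ • (fderiv ℝ α p).comp (1 - P)) p := by
  have hαP := (hα.contDiffAt (hs.mem_nhds hp)).differentiableAt (by simp)
  have hDαP := ((hα.fderiv_of_isOpen (m := ∞) hs le_rfl).contDiffAt
    (hs.mem_nhds hp)).differentiableAt (by simp)
  rw [← hPp] at hαP hDαP
  have hQp : (1 - P) p = 0 := by simp [hPp]
  have h : HasFDerivAt (relativePotentialCoeff P α) _ p :=
    (hαP.hasFDerivAt.comp p P.hasFDerivAt).add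
      (((hDαP.hasFDerivAt.comp p P.hasFDerivAt).clm_apply_of_eq_zero (1 - P).hasFDerivAt
        hQp).const_smul (2 : ℝ)⁻¹)
  refine h.congr_fderiv ?_
  simp only [Function.comp_apply, hPp]

theorem contDiffOn_relativePotential (hs : IsOpen s) (hα : ContDiffOn ℝ ∞ α s) :
    ContDiffOn ℝ ∞ (relativePotential P α) (P ⁻¹' s) :=
  (contDiffOn_relativePotentialCoeff hs hα).clm_apply (1 - P).contDiff.contDiffOn

theorem fderiv_relativePotential (hs : IsOpen s) (hα : ContDiffOn ℝ ∞ α s) (hp : p ∈ s)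
    (hPp : P p = p) : fderiv ℝ (relativePotential P α) p = (α p).comp (1 - P) := by
  have h := (hasFDerivAt_relativePotentialCoeff hs hα hp hPp).clm_apply_of_eq_zero
    (1 - P).hasFDerivAt (by simp [hPp])
  rw [relativePotentialCoeff_eq_of_map_eq hPp] at h
  exact h.fderiv

theorem fderiv_fderiv_relativePotential_apply (hs : IsOpen s) (hα : ContDiffOn ℝ ∞ α s)
    (hp : p ∈ s) (hPp : P p = p) (u v : E) :
    fderiv ℝ (fderiv ℝ (relativePotential P α)) p u v
      = fderiv ℝ α p (P u) ((1 - P) v) + fderiv ℝ α p (P v) ((1 - P) u)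
        + 2⁻¹ * (fderiv ℝ α p ((1 - P) u) ((1 - P) v) + fderiv ℝ α p ((1 - P) v) ((1 - P) u)) := by
  have hp' : p ∈ P ⁻¹' s := by simpa [hPp] using hp
  unfold relativePotential
  rw [fderiv_fderiv_clm_apply_of_map_eq_zero (hs.preimage P.continuous)
      ((contDiffOn_relativePotentialCoeff hs hα).of_le (WithTop.coe_le_coe.mpr le_top)) hp'
      (by simp [hPp]),
    (hasFDerivAt_relativePotentialCoeff hs hα hp hPp).fderiv]
  simp only [ContinuousLinearMap.comp_sub, add_apply, ContinuousLinearMap.comp_apply, smul_apply,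
    sub_apply, one_apply_eq_self, map_sub, smul_eq_mul]
  ring

def normalizedForm (P : E →L[ℝ] E) (α : E → E →L[ℝ] ℝ) (x : E) : E →L[ℝ] ℝ :=
  α x - pullback P α x - fderiv ℝ (relativePotential P α) x

theorem contDiffOn_normalizedForm (hs : IsOpen s) (hα : ContDiffOn ℝ ∞ α s) :
    ContDiffOn ℝ ∞ (normalizedForm P α) (s ∩ P ⁻¹' s) :=
  ((hα.mono inter_subset_left).sub ((contDiffOn_pullback hα).mono inter_subset_right)).sub
    (((contDiffOn_relativePotential hs hα).fderiv_of_isOpen (hs.preimage P.continuous)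
      le_rfl).mono inter_subset_right)

theorem fderiv_normalizedForm_apply (hs : IsOpen s) (hα : ContDiffOn ℝ ∞ α s) {x : E}
    (hx : x ∈ s ∩ P ⁻¹' s) (u v : E) :
    fderiv ℝ (normalizedForm P α) x u v = fderiv ℝ α x u v - fderiv ℝ α (P x) (P u) (P v)
      - fderiv ℝ (fderiv ℝ (relativePotential P α)) x u v := by
  have hPs := hs.preimage P.continuous
  have hαx := (hα.contDiffAt (hs.mem_nhds hx.1)).differentiableAt (by simp)
  have hαPx := (hα.contDiffAt (hs.mem_nhds hx.2)).differentiableAt (by simp)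
  have hpull := ((contDiffOn_pullback (L := P) hα).contDiffAt
    (hPs.mem_nhds hx.2)).differentiableAt (by simp)
  have hG := (((contDiffOn_relativePotential hs hα).fderiv_of_isOpen (m := ∞) hPs
    le_rfl).contDiffAt (hPs.mem_nhds hx.2)).differentiableAt (by simp)
  have h : HasFDerivAt (normalizedForm P α) _ x :=
    (hαx.hasFDerivAt.sub hpull.hasFDerivAt).sub hG.hasFDerivAt
  simp [h.fderiv, fderiv_pullback_apply hαPx]

theorem fderiv_normalizedForm_antisymm (hs : IsOpen s) (hα : ContDiffOn ℝ ∞ α s)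
    (hP : IsIdempotentElem P)
    (hclosed : ∀ p ∈ s, P p = p → ∀ u v, fderiv ℝ α p u v = fderiv ℝ α p v u)
    {x : E} (hx : x ∈ s ∩ P ⁻¹' s) (u v : E) :
    fderiv ℝ (normalizedForm P α) x u v - fderiv ℝ (normalizedForm P α) x v u
      = fderiv ℝ α x u v - fderiv ℝ α x v u := by
  have hPPx : P (P x) = P x := DFunLike.congr_fun hP.eq x
  have hGsymm := ((contDiffOn_relativePotential hs hα).contDiffAt
    ((hs.preimage P.continuous).mem_nhds hx.2)).isSymmSndFDerivAt
      (by rw [minSmoothness_of_isRCLikeNormedField]; exact WithTop.coe_le_coe.mpr le_top)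
  rw [fderiv_normalizedForm_apply hs hα hx, fderiv_normalizedForm_apply hs hα hx,
    hclosed (P x) hx.2 hPPx (P u), hGsymm u v]
  ring

theorem normalizedForm_eq_zero_of_map_eq (hs : IsOpen s) (hα : ContDiffOn ℝ ∞ α s) (hp : p ∈ s)
    (hPp : P p = p) : normalizedForm P α p = 0 := by
  ext v
  simp [normalizedForm, pullback, fderiv_relativePotential hs hα hp hPp, hPp]

theorem fderiv_normalizedForm_eq_zero_of_map_eq (hs : IsOpen s) (hα : ContDiffOn ℝ ∞ α s)
    (hp : p ∈ s) (hPp : P p = p) (hsymm : ∀ u v, fderiv ℝ α p u v = fderiv ℝ α p v u) :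
    fderiv ℝ (normalizedForm P α) p = 0 := by
  ext u v
  have hdecomp (w : E) : P w + (1 - P) w = w := by simp
  have hsplit : fderiv ℝ α p u v = fderiv ℝ α p (P u) (P v) + fderiv ℝ α p (P u) ((1 - P) v)
      + fderiv ℝ α p ((1 - P) u) (P v) + fderiv ℝ α p ((1 - P) u) ((1 - P) v) := by
    conv_lhs => rw [← hdecomp u, ← hdecomp v]
    simp only [map_add, add_apply]
    ring
  rw [fderiv_normalizedForm_apply hs hα ⟨hp, by simpa [hPp] using hp⟩,
    fderiv_fderiv_relativePotential_apply hs hα hp hPp, hPp, hsplit,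
    hsymm ((1 - P) u) (P v), hsymm ((1 - P) v) ((1 - P) u)]
  simp only [sub_apply, one_apply_eq_self, map_sub, add_sub_cancel, zero_apply]
  ring

end RelativePrimitive

def axisProj (n : ℕ) : (Fin n → ℝ) →L[ℝ] (Fin n → ℝ) :=
  ContinuousLinearMap.pi fun i => if (i : ℕ) = 0 then ContinuousLinearMap.proj i else 0

theorem axisProj_apply {n : ℕ} (x : Fin n → ℝ) (i : Fin n) :
    axisProj n x i = if (i : ℕ) = 0 then x i else 0 := by
  unfold axisProj
  split_ifs <;> simp [*]

theorem isIdempotentElem_axisProj (n : ℕ) : IsIdempotentElem (axisProj n) := by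
  ext x i
  change axisProj n (axisProj n x) i = axisProj n x i
  simp only [axisProj_apply]
  split_ifs <;> rfl

theorem axisProj_eq_self_iff {n : ℕ} {p : Fin n → ℝ} :
    axisProj n p = p ↔ ∀ i : Fin n, (i : ℕ) ≠ 0 → p i = 0 := by
  simp only [funext_iff, axisProj_apply]
  refine forall_congr' fun i => ?_
  split_ifs <;> simp [*, eq_comm]

theorem oneForm_primitive_vanishing_on_axis_general
    (n : ℕ) (M : Set (Fin n → ℝ)) (hM : IsOpen M)
    (h0 : (0 : Fin n → ℝ) ∈ M)
    (α : (Fin n → ℝ) → (Fin n → ℝ) →L[ℝ] ℝ)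
    (hα : ContDiffOn ℝ (⊤ : ℕ∞) α M)
    (hdα : ∀ p ∈ M, (∀ i : Fin n, (i : ℕ) ≠ 0 → p i = 0) →
      ∀ u v : Fin n → ℝ, fderiv ℝ α p u v = fderiv ℝ α p v u) :
    ∃ M' : Set (Fin n → ℝ), M' ⊆ M ∧ IsOpen M' ∧ (0 : Fin n → ℝ) ∈ M' ∧
      ∃ β : (Fin n → ℝ) → (Fin n → ℝ) →L[ℝ] ℝ,
        ContDiffOn ℝ (⊤ : ℕ∞) β M' ∧
        (∀ p ∈ M', ∀ u v : Fin n → ℝ,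
          fderiv ℝ β p u v - fderiv ℝ β p v u =
            fderiv ℝ α p u v - fderiv ℝ α p v u) ∧
        (∀ p ∈ M', (∀ i : Fin n, (i : ℕ) ≠ 0 → p i = 0) →
          β p = 0 ∧ fderiv ℝ β p = 0) := by
  set P := axisProj n
  have hclosed (p : Fin n → ℝ) (hp : p ∈ M) (hPp : P p = p) (u v : Fin n → ℝ) :
      fderiv ℝ α p u v = fderiv ℝ α p v u :=
    hdα p hp (axisProj_eq_self_iff.mp hPp) u v
  refine ⟨M ∩ P ⁻¹' M, inter_subset_left, hM.inter (hM.preimage P.continuous),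
    ⟨h0, by simpa using h0⟩, normalizedForm P α, contDiffOn_normalizedForm hM hα,
    fun x hx => fderiv_normalizedForm_antisymm hM hα (isIdempotentElem_axisProj n) hclosed hx,
    fun p hp hN => ?_⟩
  have hPp : P p = p := axisProj_eq_self_iff.mpr hN
  exact ⟨normalizedForm_eq_zero_of_map_eq hM hα hp.1 hPp,
    fderiv_normalizedForm_eq_zero_of_map_eq hM hα hp.1 hPp (hclosed p hp.1 hPp)⟩

/-- If a smooth 1-form `α` on an open set `M ⊆ ℝⁿ` containing `0`
has exterior derivative vanishing along the first coordinate axis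
`N = {(t,0,…,0)} ∩ M`, then on some neighborhood `M′` of `0` there is a smooth
1-form `β` with `dβ = dα` on `M′`, vanishing to second order along `N`. -/
theorem oneForm_primitive_vanishing_on_axis
    (n : ℕ) (hn : 2 ≤ n) (M : Set (Fin n → ℝ)) (hM : IsOpen M)
    (h0 : (0 : Fin n → ℝ) ∈ M)
    (α : (Fin n → ℝ) → (Fin n → ℝ) →L[ℝ] ℝ)
    (hα : ContDiffOn ℝ (⊤ : ℕ∞) α M)
    (hdα : ∀ p ∈ M, (∀ i : Fin n, (i : ℕ) ≠ 0 → p i = 0) →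
      ∀ u v : Fin n → ℝ, fderiv ℝ α p u v = fderiv ℝ α p v u) :
    ∃ M' : Set (Fin n → ℝ), M' ⊆ M ∧ IsOpen M' ∧ (0 : Fin n → ℝ) ∈ M' ∧
      ∃ β : (Fin n → ℝ) → (Fin n → ℝ) →L[ℝ] ℝ,
        ContDiffOn ℝ (⊤ : ℕ∞) β M' ∧
        (∀ p ∈ M', ∀ u v : Fin n → ℝ,
          fderiv ℝ β p u v - fderiv ℝ β p v u =
            fderiv ℝ α p u v - fderiv ℝ α p v u) ∧
        (∀ p ∈ M', (∀ i : Fin n, (i : ℕ) ≠ 0 → p i = 0) →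
          β p = 0 ∧ fderiv ℝ β p = 0) :=
  oneForm_primitive_vanishing_on_axis_general n M hM h0 α hα hdα

end
end

section
/- Let λ ∈ C_b^∞(ℝ,ℝ) and let F̃, G̃ : ℝ × ℝ² → ℝ be smooth functions satisfying ∂_tF̃ = λ(F̃)·sin(G̃), ∂_tG̃ = −λ′(F̃)·cos(G̃), F̃(0,x,ζ) = x, G̃(0,x,ζ) = ζ (the flow of the ODE ẋ = λ(x)sin ζ, ζ̇ = −λ′(x)cos ζ). Then: (a) for every (t,ζ) ∈ ℝ², the map x ↦ F̃(t,x,ζ) is surjective onto ℝ; (b) there exists T ∈ (0,1) such that |∂_xF̃(t,x,ζ)| ≥ 1/2 for all t ∈ (0,T) and all (x,ζ) ∈ ℝ². -/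
/-!
The flow is that of the vector field `v(x, ζ) = (λ(x) sin ζ, -λ'(x) cos ζ)`, which is bounded
and globally Lipschitz because `λ`, `λ'`, `λ''` are bounded.

(a) `|F̃(t, x, ζ) - x| ≤ sup |λ| * |t|`, so `x ↦ F̃(t, x, ζ)` is a continuous map at bounded
distance from the identity, hence surjective.

(b) By Grönwall, the trajectories from `(x, ζ)` and `(y, ζ)` stay within `|y - x| e^{Kt}` of
each other; integrating the difference of their velocities gives
`|F̃(t, y, ζ) - F̃(t, x, ζ) - (y - x)| ≤ K e^{Kt} t |y - x|`, which is at most `|y - x| / 2`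
for small `t`. Hence `|∂ₓF̃ - 1| ≤ 1 / 2`.
-/

noncomputable section

/-- `C_b^∞`: smooth with all derivatives (of every order) bounded. -/
def CbInfty (f : ℝ → ℝ) : Prop :=
  ContDiff ℝ (⊤ : ℕ∞) f ∧ ∀ k : ℕ, ∃ C : ℝ, ∀ x : ℝ, |iteratedDeriv k f x| ≤ C

open Set Real Filter
open scoped NNReal

namespace CbInfty

variable {f : ℝ → ℝ}

theorem differentiable (hf : CbInfty f) : Differentiable ℝ f :=
  hf.1.differentiable (by simp)

protected theorem deriv (hf : CbInfty f) : CbInfty (deriv f) :=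
  ⟨(contDiff_infty_iff_deriv.1 hf.1).2, fun k => by
    simpa only [← iteratedDeriv_succ'] using hf.2 (k + 1)⟩

theorem exists_norm_le (hf : CbInfty f) : ∃ C : ℝ≥0, ∀ x, ‖f x‖ ≤ C := by
  obtain ⟨C, hC⟩ := hf.2 0
  refine ⟨C.toNNReal, fun x => ?_⟩
  simpa using (hC x).trans (le_coe_toNNReal C)

theorem exists_lipschitzWith (hf : CbInfty f) : ∃ K, LipschitzWith K f := by
  obtain ⟨K, hK⟩ := hf.deriv.exists_norm_le
  exact ⟨K, lipschitzWith_of_nnnorm_deriv_le hf.differentiable fun x => hK x⟩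

end CbInfty

theorem LipschitzWith.mul_of_norm_le {α R : Type*} [PseudoMetricSpace α]
    [NonUnitalSeminormedRing R] {f g : α → R} {Kf Kg A B : ℝ≥0}
    (hf : LipschitzWith Kf f) (hg : LipschitzWith Kg g)
    (hfA : ∀ x, ‖f x‖ ≤ A) (hgB : ∀ x, ‖g x‖ ≤ B) :
    LipschitzWith (Kf * B + A * Kg) fun x => f x * g x := by
  refine LipschitzWith.of_dist_le_mul fun x y => ?_
  rw [dist_eq_norm, show f x * g x - f y * g y = (f x - f y) * g x + f y * (g x - g y) by
    noncomm_ring]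
  calc ‖(f x - f y) * g x + f y * (g x - g y)‖
      ≤ ‖f x - f y‖ * ‖g x‖ + ‖f y‖ * ‖g x - g y‖ :=
        (norm_add_le _ _).trans (add_le_add (norm_mul_le _ _) (norm_mul_le _ _))
    _ ≤ (Kf * dist x y) * B + A * (Kg * dist x y) := by
        rw [← dist_eq_norm, ← dist_eq_norm]
        gcongr
        · exact hf.dist_le_mul x y
        · exact hgB x
        · exact hfA y
        · exact hg.dist_le_mul x y
    _ = ↑(Kf * B + A * Kg) * dist x y := by push_cast; ring

theorem Continuous.surjective_of_abs_sub_le {φ : ℝ → ℝ} (hφ : Continuous φ) {c : ℝ}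
    (h : ∀ x, |φ x - x| ≤ c) : Function.Surjective φ :=
  hφ.surjective
    (tendsto_atTop_mono (fun x => by simp only [id]; linarith [(abs_le.1 (h x)).1])
      (tendsto_atTop_add_const_right _ (-c) tendsto_id))
    (tendsto_atBot_mono (fun x => by simp only [id]; linarith [(abs_le.1 (h x)).2])
      (tendsto_atBot_add_const_right _ c tendsto_id))

theorem abs_deriv_sub_one_le {φ : ℝ → ℝ} {x ε : ℝ} (hφ : DifferentiableAt ℝ φ x)
    (h : ∀ y, |φ y - φ x - (y - x)| ≤ ε * |y - x|) : |deriv φ x - 1| ≤ ε := by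
  have hslope := (hasDerivAt_iff_tendsto_slope.1 hφ.hasDerivAt).sub_const 1
  refine le_of_tendsto hslope.abs ?_
  filter_upwards [self_mem_nhdsWithin] with y (hy : y ≠ x)
  have hyx : 0 < |y - x| := abs_pos.2 (sub_ne_zero.2 hy)
  rw [slope_def_field, show (φ y - φ x) / (y - x) - 1 = (φ y - φ x - (y - x)) / (y - x) by
    field_simp [sub_ne_zero.2 hy], abs_div]
  exact (div_le_iff₀ hyx).2 (h y)

theorem norm_sub_sub_le_of_trajectories_ODE {E : Type*} [NormedAddCommGroup E]
    [NormedSpace ℝ E] {v : E → E} {K : ℝ≥0} (hv : LipschitzWith K v) {f g : ℝ → E}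
    (hf : ∀ s, HasDerivAt f (v (f s)) s) (hg : ∀ s, HasDerivAt g (v (g s)) s)
    {t : ℝ} (ht : 0 ≤ t) :
    ‖f t - g t - (f 0 - g 0)‖ ≤ K * exp (K * t) * dist (f 0) (g 0) * t := by
  have hgronwall := dist_le_of_trajectories_ODE (v := fun _ => v) (fun _ => hv)
    (fun s _ => (hf s).continuousAt.continuousWithinAt) (fun s _ => (hf s).hasDerivWithinAt)
    (fun s _ => (hg s).continuousAt.continuousWithinAt) (fun s _ => (hg s).hasDerivWithinAt)
    le_rfl (a := 0) (b := t)
  have hbound : ∀ s ∈ Ico 0 t, ‖v (f s) - v (g s)‖ ≤ K * exp (K * t) * dist (f 0) (g 0) := by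
    intro s hs
    calc ‖v (f s) - v (g s)‖ ≤ K * dist (f s) (g s) := by
          rw [← dist_eq_norm]; exact hv.dist_le_mul _ _
      _ ≤ K * (dist (f 0) (g 0) * exp (K * (s - 0))) :=
          mul_le_mul_of_nonneg_left (hgronwall s (Ico_subset_Icc_self hs)) K.2
      _ ≤ K * exp (K * t) * dist (f 0) (g 0) := by
          rw [sub_zero, mul_comm (dist _ _), ← mul_assoc]
          gcongr
          exact hs.2.le
  simpa using norm_image_sub_le_of_norm_deriv_le_segment' (f := fun s => f s - g s)
    (fun s _ => ((hf s).sub (hg s)).hasDerivWithinAt) hbound t ⟨ht, le_rfl⟩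

def flowField (lam : ℝ → ℝ) (p : ℝ × ℝ) : ℝ × ℝ :=
  (lam p.1 * sin p.2, -deriv lam p.1 * cos p.2)

theorem CbInfty.exists_lipschitzWith_flowField {lam : ℝ → ℝ} (hlam : CbInfty lam) :
    ∃ K, LipschitzWith K (flowField lam) := by
  obtain ⟨A, hA⟩ := hlam.exists_norm_le
  obtain ⟨A', hA'⟩ := hlam.deriv.exists_norm_le
  obtain ⟨K, hK⟩ := hlam.exists_lipschitzWith
  obtain ⟨K', hK'⟩ := hlam.deriv.exists_lipschitzWith
  have hsin : ∀ p : ℝ × ℝ, ‖sin p.2‖ ≤ (1 : ℝ≥0) := fun p => by simpa using abs_sin_le_one p.2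
  have hcos : ∀ p : ℝ × ℝ, ‖cos p.2‖ ≤ (1 : ℝ≥0) := fun p => by simpa using abs_cos_le_one p.2
  exact ⟨_, LipschitzWith.prodMk
    ((hK.comp LipschitzWith.prod_fst).mul_of_norm_le
      (lipschitzWith_sin.comp LipschitzWith.prod_snd) (fun p => hA p.1) hsin)
    ((hK'.comp LipschitzWith.prod_fst).neg.mul_of_norm_le
      (lipschitzWith_cos.comp LipschitzWith.prod_snd) (fun p => by simpa using hA' p.1) hcos)⟩

theorem hasDerivAt_flowField {lam : ℝ → ℝ} {F G : ℝ × ℝ × ℝ → ℝ}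
    (hF : Differentiable ℝ F) (hG : Differentiable ℝ G)
    (hFode : ∀ t x ζ : ℝ, deriv (fun s => F (s, x, ζ)) t =
      lam (F (t, x, ζ)) * sin (G (t, x, ζ)))
    (hGode : ∀ t x ζ : ℝ, deriv (fun s => G (s, x, ζ)) t =
      -(deriv lam (F (t, x, ζ))) * cos (G (t, x, ζ)))
    (x ζ t : ℝ) :
    HasDerivAt (fun s => (F (s, x, ζ), G (s, x, ζ)))
      (flowField lam (F (t, x, ζ), G (t, x, ζ))) t := by
  have hFt : DifferentiableAt ℝ (fun s => F (s, x, ζ)) t := by fun_prop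
  have hGt : DifferentiableAt ℝ (fun s => G (s, x, ζ)) t := by fun_prop
  exact (hFode t x ζ ▸ hFt.hasDerivAt).prodMk (hGode t x ζ ▸ hGt.hasDerivAt)

theorem abs_sub_sub_le_of_hasDerivAt_flowField {lam : ℝ → ℝ} {F G : ℝ × ℝ × ℝ → ℝ}
    {K : ℝ≥0} (hK : LipschitzWith K (flowField lam))
    (hflow : ∀ x ζ t : ℝ, HasDerivAt (fun s => (F (s, x, ζ), G (s, x, ζ)))
      (flowField lam (F (t, x, ζ), G (t, x, ζ))) t)
    (hF0 : ∀ x ζ : ℝ, F (0, x, ζ) = x) (hG0 : ∀ x ζ : ℝ, G (0, x, ζ) = ζ)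
    {t : ℝ} (ht : 0 ≤ t) (x y ζ : ℝ) :
    |F (t, y, ζ) - F (t, x, ζ) - (y - x)| ≤ K * exp (K * t) * t * |y - x| := by
  have hgronwall := norm_sub_sub_le_of_trajectories_ODE hK (hflow y ζ) (hflow x ζ) ht
  simp only [hF0, hG0, Prod.dist_eq, Real.dist_eq, sub_self, abs_zero, abs_nonneg,
    max_eq_left] at hgronwall
  rw [mul_right_comm]
  simpa only [Prod.fst_sub, norm_eq_abs] using (norm_fst_le _).trans hgronwall

theorem mul_exp_mul_mul_le_half {K t : ℝ} (hK : 0 ≤ K) (ht₀ : 0 ≤ t)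
    (ht : t ≤ 1 / (2 * (K * exp K + 1))) : K * exp (K * t) * t ≤ 1 / 2 := by
  have hKe : 0 ≤ K * exp K := by positivity
  have ht₁ : t ≤ 1 := ht.trans (by rw [div_le_one (by positivity)]; linarith)
  have hexp : K * exp (K * t) ≤ K * exp K := by
    gcongr
    exact mul_le_of_le_one_right hK ht₁
  calc K * exp (K * t) * t ≤ (K * exp K + 1) * t := by nlinarith
    _ ≤ (K * exp K + 1) * (1 / (2 * (K * exp K + 1))) := by gcongr
    _ = 1 / 2 := by field_simp

/-- Lemma C.7: surjectivity and short-time reversibility of the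
compactified classical flow. -/
theorem flow_surjective_and_x_derivative_bounded_below
    (lam : ℝ → ℝ) (hlam : CbInfty lam)
    (F G : ℝ × ℝ × ℝ → ℝ)
    (hF : ContDiff ℝ (⊤ : ℕ∞) F) (hG : ContDiff ℝ (⊤ : ℕ∞) G)
    (hFode : ∀ t x ζ : ℝ, deriv (fun s => F (s, x, ζ)) t =
      lam (F (t, x, ζ)) * Real.sin (G (t, x, ζ)))
    (hGode : ∀ t x ζ : ℝ, deriv (fun s => G (s, x, ζ)) t =
      -(deriv lam (F (t, x, ζ))) * Real.cos (G (t, x, ζ)))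
    (hF0 : ∀ x ζ : ℝ, F (0, x, ζ) = x)
    (hG0 : ∀ x ζ : ℝ, G (0, x, ζ) = ζ) :
    (∀ t ζ : ℝ, Function.Surjective (fun x => F (t, x, ζ))) ∧
    (∃ T : ℝ, T ∈ Set.Ioo (0 : ℝ) 1 ∧
      ∀ t ∈ Set.Ioo (0 : ℝ) T, ∀ x ζ : ℝ,
        (1 : ℝ) / 2 ≤ |deriv (fun y => F (t, y, ζ)) x|) := by
  have hFd : Differentiable ℝ F := hF.differentiable (by simp)
  have hflow := hasDerivAt_flowField hFd (hG.differentiable (by simp)) hFode hGode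
  refine ⟨fun t ζ => ?_, ?_⟩
  · obtain ⟨C, hC⟩ := hlam.exists_norm_le
    refine Continuous.surjective_of_abs_sub_le (c := C * |t|) (by fun_prop) fun x => ?_
    have hlip : LipschitzWith C fun s => F (s, x, ζ) :=
      lipschitzWith_of_nnnorm_deriv_le (by fun_prop) fun s => by
        rw [← NNReal.coe_le_coe, coe_nnnorm, hFode, norm_mul, norm_eq_abs (sin _)]
        simpa using mul_le_mul (hC _) (abs_sin_le_one _) (abs_nonneg _) C.2
    simpa [hF0, Real.dist_eq] using hlip.dist_le_mul t 0
  · obtain ⟨K, hK⟩ := hlam.exists_lipschitzWith_flowField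
    refine ⟨1 / (2 * (K * exp K + 1)), ⟨by positivity, ?_⟩, fun t ht x ζ => ?_⟩
    · rw [div_lt_one (by positivity)]
      linarith [show (0 : ℝ) ≤ K * exp K by positivity]
    have hnear : ∀ y, |F (t, y, ζ) - F (t, x, ζ) - (y - x)| ≤ 1 / 2 * |y - x| := fun y =>
      (abs_sub_sub_le_of_hasDerivAt_flowField hK hflow hF0 hG0 ht.1.le x y ζ).trans <| by
        gcongr
        exact mul_exp_mul_mul_le_half K.2 ht.1.le ht.2.le
    have hderiv := abs_deriv_sub_one_le (by fun_prop) hnear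
    linarith [(abs_le.1 hderiv).1, le_abs_self (deriv (fun y => F (t, y, ζ)) x)]

end
end
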